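/- arXiv:2112.14107 — 2 statements merged into one kernel-verified Lean document; each statement's English description precedes it below -/
import Mathlib

section
/- Bijectivity and inverse-derivative bound for the height function. If 1/4 < c₀ < π/2, then the restriction of h to [c₀/β, π/(2β)) is a bijection onto (−∞, h(c₀/β)], and its inverse function h⁻¹ satisfies 2/(1 − 4c₀) ≤ (h⁻¹)′(x) < 0 for every x ∈ (−∞, h(c₀/β)]. -/
open Finset Complex Real

/-- The function `R(z) = 2βz − (1/N) Σ_i log(z − λ_i)`, with `log` the principal branch. -/
noncomputable def Rfun (N : ℕ) (ev : Fin N → ℝ) (β : ℝ) (z : ℂ) : ℂ :=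
  2 * (β : ℂ) * z - (1 / N : ℂ) * ∑ i, Complex.log (z - (ev i : ℂ))

noncomputable def psi (N : ℕ) (ev : Fin N → ℝ) (β : ℝ) (x y : ℝ) : ℝ :=
  (1 / N : ℝ) * ∑ i, Real.arctan ((x - ev i) / y) + 2 * β * y

noncomputable def px (N : ℕ) (ev : Fin N → ℝ) (x y : ℝ) : ℝ :=
  (1 / N : ℝ) * ∑ i, y / (y ^ 2 + (x - ev i) ^ 2)

noncomputable def py (N : ℕ) (ev : Fin N → ℝ) (β : ℝ) (x y : ℝ) : ℝ :=
  2 * β - (1 / N : ℝ) * ∑ i, (x - ev i) / (y ^ 2 + (x - ev i) ^ 2)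

private lemma arg_aux (a y : ℝ) (hy : 0 < y) :
    Complex.arg ((a : ℂ) + (y : ℂ) * Complex.I) = π / 2 - Real.arctan (a / y) := by
  have h1 := Real.arctan_mem_Ioo (a / y)
  have hpi := Real.pi_pos
  have hθ : π / 2 - Real.arctan (a / y) ∈ Set.Ioc (-π) π := by
    constructor
    · have := h1.2; linarith
    · have := h1.1; linarith
  have hS : (0:ℝ) < Real.sqrt (1 + (a / y) ^ 2) := Real.sqrt_pos.2 (by positivity)
  have hr : 0 < y * Real.sqrt (1 + (a / y) ^ 2) := mul_pos hy hS
  have key := Complex.arg_mul_cos_add_sin_mul_I hr hθ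
  have hre : Real.cos (π / 2 - Real.arctan (a / y)) = (a / y) / Real.sqrt (1 + (a / y) ^ 2) := by
    rw [Real.cos_pi_div_two_sub, Real.sin_arctan]
  have him : Real.sin (π / 2 - Real.arctan (a / y)) = 1 / Real.sqrt (1 + (a / y) ^ 2) := by
    rw [Real.sin_pi_div_two_sub, Real.cos_arctan]
  have hz : ((y * Real.sqrt (1 + (a / y) ^ 2) : ℝ) : ℂ) *
      (Real.cos (π / 2 - Real.arctan (a / y)) + Real.sin (π / 2 - Real.arctan (a / y)) * Complex.I)
      = (a : ℂ) + (y : ℂ) * Complex.I := by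
    rw [hre, him]
    have hS' : Real.sqrt (1 + (a / y) ^ 2) ≠ 0 := ne_of_gt hS
    have hy' : y ≠ 0 := ne_of_gt hy
    apply Complex.ext <;> simp [Complex.add_re, Complex.add_im, Complex.mul_re, Complex.mul_im] <;>
      field_simp
  rw [← Complex.ofReal_cos, ← Complex.ofReal_sin] at key
  rw [← hz]; exact key

private lemma psi_of_im_eq_zero {N : ℕ} (hN : 0 < N) (ev : Fin N → ℝ) (β : ℝ) {x y : ℝ}
    (hy : 0 < y) (him : (Rfun N ev β ((x : ℂ) + (y : ℂ) * Complex.I)).im = 0) :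
    psi N ev β x y = π / 2 := by
  set z : ℂ := (x : ℂ) + (y : ℂ) * Complex.I with hz
  have himz : (2 * (β : ℂ) * z).im = 2 * β * y := by
    simp [hz, Complex.mul_im, Complex.add_im, Complex.add_re]
  have hlog : ∀ i : Fin N, (Complex.log (z - (ev i : ℂ))).im
      = π / 2 - Real.arctan ((x - ev i) / y) := by
    intro i
    have : z - (ev i : ℂ) = ((x - ev i : ℝ) : ℂ) + (y : ℂ) * Complex.I := by
      push_cast [hz]; ring
    rw [Complex.log_im, this, arg_aux _ _ hy]
  have hsum : ((1 / N : ℂ) * ∑ i, Complex.log (z - (ev i : ℂ))).im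
      = (1 / N : ℝ) * ∑ i : Fin N, (π / 2 - Real.arctan ((x - ev i) / y)) := by
    have : (1 / N : ℂ) = ((1 / N : ℝ) : ℂ) := by push_cast; ring
    rw [this, Complex.im_ofReal_mul, Complex.im_sum]
    congr 1
    exact Finset.sum_congr rfl fun i _ => hlog i
  have him' : 2 * β * y - (1 / N : ℝ) * ∑ i : Fin N, (π / 2 - Real.arctan ((x - ev i) / y)) = 0 := by
    have : (Rfun N ev β z).im
        = (2 * (β : ℂ) * z).im - ((1 / N : ℂ) * ∑ i, Complex.log (z - (ev i : ℂ))).im := by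
      simp [Rfun, Complex.sub_im]
    rw [this, himz, hsum] at him
    exact him
  have hNne : (N : ℝ) ≠ 0 := Nat.cast_ne_zero.2 hN.ne'
  rw [Finset.sum_sub_distrib, Finset.sum_const, Finset.card_univ, Fintype.card_fin] at him'
  have : (1 / N : ℝ) * (N • (π / 2)) = π / 2 := by
    rw [nsmul_eq_mul]; field_simp
  rw [mul_sub, this] at him'
  unfold psi
  linarith

private lemma hasDerivAt_psi_x (N : ℕ) (ev : Fin N → ℝ) (β : ℝ) (x : ℝ) {y : ℝ} (hy : y ≠ 0) :
    HasDerivAt (fun x => psi N ev β x y) (px N ev x y) x := by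
  have hterm : ∀ i : Fin N, HasDerivAt (fun x => Real.arctan ((x - ev i) / y))
      (y / (y ^ 2 + (x - ev i) ^ 2)) x := by
    intro i
    have h1 : HasDerivAt (fun x : ℝ => (x - ev i) / y) (1 / y) x := by
      simpa using ((hasDerivAt_id x).sub_const (ev i)).div_const y
    have h2 := (Real.hasDerivAt_arctan ((x - ev i) / y)).comp x h1
    refine h2.congr_deriv ?_
    have hden : y ^ 2 + (x - ev i) ^ 2 ≠ 0 := by positivity
    field_simp
  have hsum : HasDerivAt (fun x => ∑ i : Fin N, Real.arctan ((x - ev i) / y))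
      (∑ i : Fin N, y / (y ^ 2 + (x - ev i) ^ 2)) x := by
    simpa using HasDerivAt.fun_sum (fun i _ => hterm i)
  simpa [psi, px] using (hsum.const_mul ((1 : ℝ) / N)).add_const (2 * β * y)

private lemma hasDerivAt_psi_y (N : ℕ) (ev : Fin N → ℝ) (β : ℝ) (x : ℝ) {y : ℝ} (hy : y ≠ 0) :
    HasDerivAt (fun y => psi N ev β x y) (py N ev β x y) y := by
  have hterm : ∀ i : Fin N, HasDerivAt (fun y => Real.arctan ((x - ev i) / y))
      (-((x - ev i) / (y ^ 2 + (x - ev i) ^ 2))) y := by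
    intro i
    have h1 : HasDerivAt (fun y : ℝ => (x - ev i) / y) (-((x - ev i) / y ^ 2)) y := by
      simpa [div_eq_mul_inv] using (hasDerivAt_inv hy).const_mul (x - ev i)
    have h2 := (Real.hasDerivAt_arctan ((x - ev i) / y)).comp y h1
    refine h2.congr_deriv ?_
    have hden : y ^ 2 + (x - ev i) ^ 2 ≠ 0 := by positivity
    field_simp
  have hsum : HasDerivAt (fun y => ∑ i : Fin N, Real.arctan ((x - ev i) / y))
      (∑ i : Fin N, -((x - ev i) / (y ^ 2 + (x - ev i) ^ 2))) y := by
    simpa using HasDerivAt.fun_sum (fun i _ => hterm i)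
  have hlin : HasDerivAt (fun y : ℝ => 2 * β * y) (2 * β) y := by
    simpa using (hasDerivAt_id y).const_mul (2 * β)
  have := (hsum.const_mul ((1 : ℝ) / N)).add hlin
  refine this.congr_deriv ?_
  simp only [py, Finset.sum_neg_distrib, mul_neg]
  ring

private lemma px_pos {N : ℕ} (hN : 0 < N) (ev : Fin N → ℝ) (x : ℝ) {y : ℝ} (hy : 0 < y) :
    0 < px N ev x y := by
  have : (0:ℝ) < ∑ i : Fin N, y / (y ^ 2 + (x - ev i) ^ 2) := by
    haveI : Nonempty (Fin N) := ⟨⟨0, hN⟩⟩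
    apply Finset.sum_pos (fun i _ => by positivity) Finset.univ_nonempty
  have hN' : (0:ℝ) < (N:ℝ) := Nat.cast_pos.2 hN
  unfold px; positivity

private lemma px_le {N : ℕ} (hN : 0 < N) (ev : Fin N → ℝ) (x : ℝ) {y : ℝ} (hy : 0 < y) :
    px N ev x y ≤ 1 / y := by
  have hN' : (0:ℝ) < (N:ℝ) := Nat.cast_pos.2 hN
  have hterm : ∀ i : Fin N, y / (y ^ 2 + (x - ev i) ^ 2) ≤ 1 / y := by
    intro i
    rw [div_le_div_iff₀ (by positivity) hy]
    nlinarith [sq_nonneg (x - ev i)]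
  have hsum : ∑ i : Fin N, y / (y ^ 2 + (x - ev i) ^ 2) ≤ (N : ℝ) * (1 / y) := by
    calc ∑ i : Fin N, y / (y ^ 2 + (x - ev i) ^ 2) ≤ ∑ _i : Fin N, 1 / y :=
          Finset.sum_le_sum fun i _ => hterm i
      _ = (N : ℝ) * (1 / y) := by simp [mul_comm]
  unfold px
  calc (1 / N : ℝ) * ∑ i : Fin N, y / (y ^ 2 + (x - ev i) ^ 2)
      ≤ (1 / N : ℝ) * ((N : ℝ) * (1 / y)) := by
        apply mul_le_mul_of_nonneg_left hsum (by positivity)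
    _ = 1 / y := by field_simp

private lemma py_ge {N : ℕ} (hN : 0 < N) (ev : Fin N → ℝ) (β : ℝ) (x : ℝ) {y : ℝ} (hy : 0 < y) :
    2 * β - 1 / (2 * y) ≤ py N ev β x y := by
  have hN' : (0:ℝ) < (N:ℝ) := Nat.cast_pos.2 hN
  have hterm : ∀ i : Fin N, (x - ev i) / (y ^ 2 + (x - ev i) ^ 2) ≤ 1 / (2 * y) := by
    intro i
    rw [div_le_div_iff₀ (by positivity) (by positivity)]
    nlinarith [sq_nonneg (x - ev i - y)]
  have hsum : ∑ i : Fin N, (x - ev i) / (y ^ 2 + (x - ev i) ^ 2) ≤ (N : ℝ) * (1 / (2 * y)) := by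
    calc ∑ i : Fin N, (x - ev i) / (y ^ 2 + (x - ev i) ^ 2) ≤ ∑ _i : Fin N, 1 / (2 * y) :=
          Finset.sum_le_sum fun i _ => hterm i
      _ = (N : ℝ) * (1 / (2 * y)) := by simp [mul_comm]
  have : (1 / N : ℝ) * ∑ i : Fin N, (x - ev i) / (y ^ 2 + (x - ev i) ^ 2) ≤ 1 / (2 * y) := by
    calc (1 / N : ℝ) * ∑ i : Fin N, (x - ev i) / (y ^ 2 + (x - ev i) ^ 2)
        ≤ (1 / N : ℝ) * ((N : ℝ) * (1 / (2 * y))) :=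
          mul_le_mul_of_nonneg_left hsum (by positivity)
      _ = 1 / (2 * y) := by field_simp
  unfold py
  linarith

private lemma py_pos {N : ℕ} (hN : 0 < N) (ev : Fin N → ℝ) {β : ℝ} (hβ : 0 < β) (x : ℝ)
    {y : ℝ} (hy : 0 < y) (hy' : 1 < 4 * β * y) : 0 < py N ev β x y := by
  have h1 := py_ge hN ev β x hy
  have h2 : 1 / (2 * y) < 2 * β := by
    rw [div_lt_iff₀ (by positivity)]; nlinarith
  linarith

private lemma strictMono_psi_x {N : ℕ} (hN : 0 < N) (ev : Fin N → ℝ) (β : ℝ) {y : ℝ} (hy : 0 < y) :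
    StrictMono (fun x => psi N ev β x y) := by
  apply strictMono_of_deriv_pos
  intro x
  rw [(hasDerivAt_psi_x N ev β x hy.ne').deriv]
  exact px_pos hN ev x hy

private lemma strictMonoOn_psi_y {N : ℕ} (hN : 0 < N) (ev : Fin N → ℝ) {β : ℝ} (hβ : 0 < β)
    (x : ℝ) {t : ℝ} (ht : 0 < t) (ht' : 1 < 4 * β * t) :
    StrictMonoOn (fun y => psi N ev β x y) (Set.Ici t) := by
  apply strictMonoOn_of_deriv_pos (convex_Ici t)
  · intro y hy
    exact (hasDerivAt_psi_y N ev β x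
      (lt_of_lt_of_le ht hy).ne').continuousAt.continuousWithinAt
  · intro y hy
    rw [interior_Ici] at hy
    have hy0 : 0 < y := lt_trans ht hy
    rw [(hasDerivAt_psi_y N ev β x hy0.ne').deriv]
    have h1 := py_ge hN ev β x hy0
    have h2 : 1 / (2 * y) < 2 * β := by
      rw [div_lt_iff₀ (by positivity)]
      nlinarith [mul_pos hβ (sub_pos.2 (show t < y from hy))]
    linarith

private lemma continuousAt_px {N : ℕ} (ev : Fin N → ℝ) (p₀ : ℝ × ℝ) (hy : p₀.2 ≠ 0) :
    ContinuousAt (fun p : ℝ × ℝ => px N ev p.1 p.2) p₀ := by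
  unfold px
  apply ContinuousAt.mul continuousAt_const
  apply tendsto_finset_sum
  intro i _
  apply ContinuousAt.div
  · exact continuous_snd.continuousAt
  · fun_prop
  · have : p₀.2 ^ 2 + (p₀.1 - ev i) ^ 2 > 0 := by positivity
    exact this.ne'

private lemma continuousAt_py {N : ℕ} (ev : Fin N → ℝ) (β : ℝ) (x : ℝ) {y₀ : ℝ} (hy : y₀ ≠ 0) :
    ContinuousAt (fun y : ℝ => py N ev β x y) y₀ := by
  unfold py
  apply ContinuousAt.sub continuousAt_const
  apply ContinuousAt.mul continuousAt_const
  apply tendsto_finset_sum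
  intro i _
  apply ContinuousAt.div continuousAt_const
  · fun_prop
  · have : y₀ ^ 2 + (x - ev i) ^ 2 > 0 := by positivity
    exact this.ne'

private lemma mvt_signed (f f' : ℝ → ℝ) {a b : ℝ} (hab : a ≠ b)
    (hd : ∀ s ∈ Set.uIcc a b, HasDerivAt f (f' s) s) :
    ∃ c, |c - a| ≤ |b - a| ∧ c ∈ Set.uIcc a b ∧ f b - f a = f' c * (b - a) := by
  rcases hab.lt_or_gt with hlt | hlt
  · have huIcc : Set.uIcc a b = Set.Icc a b := Set.uIcc_of_le hlt.le
    obtain ⟨c, hc, hceq⟩ := exists_hasDerivAt_eq_slope f f' hlt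
      (fun s hs => (hd s (huIcc ▸ hs)).continuousAt.continuousWithinAt)
      (fun s hs => hd s (huIcc ▸ Set.mem_Icc_of_Ioo hs))
    refine ⟨c, ?_, huIcc ▸ Set.mem_Icc_of_Ioo hc, ?_⟩
    · rw [_root_.abs_of_nonneg (by linarith [hc.1] : (0:ℝ) ≤ c - a),
        _root_.abs_of_nonneg (by linarith : (0:ℝ) ≤ b - a)]
      linarith [hc.2]
    · rw [hceq, div_mul_cancel₀ _ (by linarith : b - a ≠ 0)]
  · have huIcc : Set.uIcc a b = Set.Icc b a := Set.uIcc_of_ge hlt.le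
    obtain ⟨c, hc, hceq⟩ := exists_hasDerivAt_eq_slope f f' hlt
      (fun s hs => (hd s (huIcc ▸ hs)).continuousAt.continuousWithinAt)
      (fun s hs => hd s (huIcc ▸ Set.mem_Icc_of_Ioo hs))
    refine ⟨c, ?_, huIcc ▸ Set.mem_Icc_of_Ioo hc, ?_⟩
    · rw [_root_.abs_of_nonpos (by linarith [hc.2] : c - a ≤ 0),
        _root_.abs_of_nonpos (by linarith : b - a ≤ 0)]
      linarith [hc.1]
    · have hne : a - b ≠ 0 := by linarith
      rw [eq_div_iff hne] at hceq
      linear_combination hceq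

set_option maxHeartbeats 1000000 in
/-- **Bijectivity and inverse-derivative bound for the height function.**
If `1/4 < c₀ < π/2`, then the restriction of the steepest-descent height function `h` to
`[c₀/β, π/(2β))` is a bijection onto `(−∞, h(c₀/β)]`, and its inverse function `g = h⁻¹`
satisfies `2/(1 − 4c₀) ≤ g′(x) < 0` for every `x ∈ (−∞, h(c₀/β)]` (derivative taken within
`(−∞, h(c₀/β)]`). -/
theorem height_function_bijective_and_inverse_deriv
    (N : ℕ) (hN : 0 < N) (ev : Fin N → ℝ) (hev : Antitone ev) (β : ℝ) (hβ : 0 < β)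
    (γ : ℝ) (hγ : γ ∈ Set.Ioi (ev ⟨0, hN⟩))
    (hγeq : (1 / N : ℝ) * ∑ i, 1 / (γ - ev i) = 2 * β)
    (h : ℝ → ℝ) (h0 : h 0 = γ)
    (hhS : ∀ y : ℝ, 0 < |y| → |y| < π / (2 * β) →
      (Rfun N ev β (h y + y * Complex.I)).im = 0)
    (c₀ : ℝ) (hc₀ : 1 / 4 < c₀) (hc₀' : c₀ < π / 2) :
    Set.BijOn h (Set.Ico (c₀ / β) (π / (2 * β))) (Set.Iic (h (c₀ / β))) ∧
    ∃ g : ℝ → ℝ,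
      (∀ y ∈ Set.Ico (c₀ / β) (π / (2 * β)), g (h y) = y) ∧
      (∀ x ∈ Set.Iic (h (c₀ / β)), h (g x) = x ∧
        g x ∈ Set.Ico (c₀ / β) (π / (2 * β))) ∧
      (∀ x ∈ Set.Iic (h (c₀ / β)),
        ∃ D : ℝ, HasDerivWithinAt g D (Set.Iic (h (c₀ / β))) x ∧
          2 / (1 - 4 * c₀) ≤ D ∧ D < 0) := by
  have hπ := Real.pi_pos
  set W : ℝ := π / (2 * β) with hWdef
  set c₁ : ℝ := (1 / 4 + c₀) / 2 with hc₁def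
  have hc₁a : 1 / 4 < c₁ := by rw [hc₁def]; linarith
  have hc₁b : c₁ < c₀ := by rw [hc₁def]; linarith
  have hc₁pos : (0:ℝ) < c₁ := by linarith
  have hc₀pos : (0:ℝ) < c₀ := by linarith
  set t₁ : ℝ := c₁ / β with ht₁def
  set t₀ : ℝ := c₀ / β with ht₀def
  have ht₁pos : 0 < t₁ := div_pos hc₁pos hβ
  have ht₀pos : 0 < t₀ := div_pos hc₀pos hβ
  have ht₁t₀ : t₁ < t₀ := by
    rw [ht₁def, ht₀def, div_lt_div_iff_of_pos_right hβ]; exact hc₁b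
  have ht₀W : t₀ < W := by
    rw [ht₀def, hWdef, div_lt_div_iff₀ hβ (by positivity)]; nlinarith
  have ht₁W : t₁ < W := lt_trans ht₁t₀ ht₀W
  have hWpos : 0 < W := lt_trans ht₀pos ht₀W
  have hβt₁ : 1 < 4 * β * t₁ := by
    have he4 : 4 * β * t₁ = 4 * c₁ := by rw [ht₁def]; field_simp
    rw [he4]; linarith
  have hβt : ∀ y : ℝ, t₁ ≤ y → 1 < 4 * β * y := by
    intro y hy; nlinarith
  -- the defining equation
  have heq : ∀ y, t₁ ≤ y → y < W → psi N ev β (h y) y = π / 2 := by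
    intro y h1 h2
    have hy0 : 0 < y := lt_of_lt_of_le ht₁pos h1
    have him := hhS y (by rwa [abs_of_pos hy0]) (by rwa [abs_of_pos hy0])
    exact psi_of_im_eq_zero hN ev β hy0 him
  -- strict antitonicity of h
  have hanti : ∀ y₁ y₂, t₁ ≤ y₁ → y₁ < y₂ → y₂ < W → h y₂ < h y₁ := by
    intro y₁ y₂ hy₁ hlt hy₂
    have hy₂pos : 0 < y₂ := lt_trans (lt_of_lt_of_le ht₁pos hy₁) hlt
    have h1 : psi N ev β (h y₁) y₁ = π / 2 := heq _ hy₁ (lt_trans hlt hy₂)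
    have h2 : psi N ev β (h y₂) y₂ = π / 2 := heq _ (le_trans hy₁ hlt.le) hy₂
    have h3 : psi N ev β (h y₁) y₁ < psi N ev β (h y₁) y₂ :=
      strictMonoOn_psi_y hN ev hβ (h y₁) ht₁pos hβt₁ hy₁ (le_trans hy₁ hlt.le) hlt
    have h4 : psi N ev β (h y₂) y₂ < psi N ev β (h y₁) y₂ := by rw [h2, ← h1]; exact h3
    exact (strictMono_psi_x hN ev β hy₂pos).lt_iff_lt.1 h4
  have hantile : ∀ y₁ y₂, t₁ ≤ y₁ → y₁ ≤ y₂ → y₂ < W → h y₂ ≤ h y₁ := by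
    intro y₁ y₂ hy₁ hle hy₂
    rcases eq_or_lt_of_le hle with rfl | hlt
    · exact le_refl _
    · exact (hanti y₁ y₂ hy₁ hlt hy₂).le
  have hinj : ∀ y₁ y₂, t₁ ≤ y₁ → y₁ < W → t₁ ≤ y₂ → y₂ < W → h y₁ = h y₂ → y₁ = y₂ := by
    intro y₁ y₂ ha hb hc hd he
    by_contra hne
    rcases Ne.lt_or_gt hne with hl | hl
    · exact absurd he (ne_of_gt (hanti y₁ y₂ ha hl hd))
    · exact absurd he (ne_of_lt (hanti y₂ y₁ hc hl hb))
  have hXX₁ : h t₀ < h t₁ := hanti t₁ t₀ (le_refl _) ht₁t₀ ht₀W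
  -- surjectivity
  have hsurj : ∀ x, x ≤ h t₁ → ∃ y, t₁ ≤ y ∧ y < W ∧ h y = x := by
    intro x hx
    have hcont : ContinuousOn (fun y => psi N ev β x y) (Set.Icc t₁ W) := by
      intro y hy
      exact (hasDerivAt_psi_y N ev β x
        (lt_of_lt_of_le ht₁pos hy.1).ne').continuousAt.continuousWithinAt
    have hqt₁ : psi N ev β x t₁ ≤ π / 2 := by
      rw [← heq t₁ (le_refl _) ht₁W]
      exact (strictMono_psi_x hN ev β ht₁pos).monotone hx
    have hqW : π / 2 < psi N ev β x W := by
      have h2βW : 2 * β * W = π := by rw [hWdef]; field_simp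
      have hNpos : (0:ℝ) < (N:ℝ) := Nat.cast_pos.2 hN
      haveI : Nonempty (Fin N) := ⟨⟨0, hN⟩⟩
      have hs : ∑ _i : Fin N, (-(π/2)) < ∑ i : Fin N, Real.arctan ((x - ev i) / W) := by
        apply Finset.sum_lt_sum_of_nonempty Finset.univ_nonempty
        intro i _
        exact Real.neg_pi_div_two_lt_arctan _
      have hs' : (-(π/2)) * N < ∑ i : Fin N, Real.arctan ((x - ev i) / W) := by
        calc (-(π/2)) * N = ∑ _i : Fin N, (-(π/2)) := by
              simp [Finset.sum_const, Finset.card_univ, mul_comm]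
          _ < _ := hs
      have : -(π/2) < (1 / N : ℝ) * ∑ i : Fin N, Real.arctan ((x - ev i) / W) := by
        rw [show (-(π/2) : ℝ) = (1 / N : ℝ) * ((-(π/2)) * N) by field_simp]
        exact mul_lt_mul_of_pos_left hs' (by positivity)
      unfold psi
      rw [h2βW]
      linarith
    obtain ⟨y, hyIcc, hqy⟩ := intermediate_value_Icc (le_of_lt ht₁W) hcont ⟨hqt₁, hqW.le⟩
    have hyW : y < W := by
      rcases eq_or_lt_of_le hyIcc.2 with rfl | hlt
      · exact absurd hqy (by linarith)
      · exact hlt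
    have hy0 : 0 < y := lt_of_lt_of_le ht₁pos hyIcc.1
    have hpsihy : psi N ev β (h y) y = π / 2 := heq y hyIcc.1 hyW
    have : x = h y := (strictMono_psi_x hN ev β hy0).injective (hqy.trans hpsihy.symm)
    exact ⟨y, hyIcc.1, hyW, this.symm⟩
  -- inverse function via choice
  have hgex : ∀ x : ℝ, ∃ y : ℝ, x ≤ h t₁ → (t₁ ≤ y ∧ y < W ∧ h y = x) := by
    intro x
    by_cases hx : x ≤ h t₁
    · obtain ⟨y, hy⟩ := hsurj x hx
      exact ⟨y, fun _ => hy⟩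
    · exact ⟨0, fun hc => absurd hc hx⟩
  choose g hg using hgex
  have hginv : ∀ y, t₁ ≤ y → y < W → g (h y) = y := by
    intro y hy1 hy2
    have hle : h y ≤ h t₁ := hantile t₁ y (le_refl _) hy1 hy2
    obtain ⟨ha, hb, hc⟩ := hg (h y) hle
    exact hinj _ _ ha hb hy1 hy2 hc
  -- membership above t₀ for inverse points
  have hgt₀ : ∀ x, x ≤ h t₀ → t₀ ≤ g x := by
    intro x hx
    obtain ⟨ha, hb, hc⟩ := hg x (le_trans hx hXX₁.le)
    by_contra hlt
    push_neg at hlt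
    have := hanti (g x) t₀ ha hlt ht₀W
    rw [hc] at this
    linarith
  -- First part: BijOn
  have hbij : Set.BijOn h (Set.Ico t₀ W) (Set.Iic (h t₀)) := by
    refine ⟨?_, ?_, ?_⟩
    · intro y hy
      exact hantile t₀ y ht₁t₀.le hy.1 hy.2
    · intro y₁ hy₁ y₂ hy₂ hhe
      exact hinj y₁ y₂ (le_trans ht₁t₀.le hy₁.1) hy₁.2 (le_trans ht₁t₀.le hy₂.1) hy₂.2 hhe
    · intro x hx
      obtain ⟨ha, hb, hc⟩ := hg x (le_trans hx hXX₁.le)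
      exact ⟨g x, ⟨hgt₀ x hx, hb⟩, hc⟩
  refine ⟨hbij, g, ?_, ?_, ?_⟩
  · intro y hy
    exact hginv y (le_trans ht₁t₀.le hy.1) hy.2
  · intro x hx
    obtain ⟨ha, hb, hc⟩ := hg x (le_trans hx hXX₁.le)
    exact ⟨hc, hgt₀ x hx, hb⟩
  -- derivative part
  intro x₀ hx₀
  obtain ⟨hy₀t₁, hy₀W, hy₀x₀⟩ := hg x₀ (le_trans hx₀ hXX₁.le)
  have hy₀t₀ : t₀ ≤ g x₀ := hgt₀ x₀ hx₀
  have hy₀pos : 0 < g x₀ := lt_of_lt_of_le ht₀pos hy₀t₀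
  -- continuity of g at x₀
  have hgcont : ContinuousAt g x₀ := by
    rw [Metric.continuousAt_iff]
    intro ε hε
    set ε' : ℝ := min ε (min ((g x₀ - t₁) / 2) ((W - g x₀) / 2)) with hε'def
    have hy₀t₁' : t₁ < g x₀ := lt_of_lt_of_le ht₁t₀ hy₀t₀
    have hε'pos : 0 < ε' := by
      apply lt_min hε
      apply lt_min <;> linarith
    have hε'a : ε' ≤ (g x₀ - t₁) / 2 := le_trans (min_le_right _ _) (min_le_left _ _)
    have hε'b : ε' ≤ (W - g x₀) / 2 := le_trans (min_le_right _ _) (min_le_right _ _)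
    have hε'ε : ε' ≤ ε := min_le_left _ _
    have hym : t₁ ≤ g x₀ - ε' := by linarith
    have hyp : g x₀ + ε' < W := by linarith
    have h1 : x₀ < h (g x₀ - ε') := by
      have := hanti (g x₀ - ε') (g x₀) hym (by linarith) hy₀W
      rw [hy₀x₀] at this; exact this
    have h2 : h (g x₀ + ε') < x₀ := by
      have := hanti (g x₀) (g x₀ + ε') hy₀t₁ (by linarith) hyp
      rw [hy₀x₀] at this; exact this
    refine ⟨min (h (g x₀ - ε') - x₀) (x₀ - h (g x₀ + ε')), by apply lt_min <;> linarith, ?_⟩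
    intro x hdist
    rw [Real.dist_eq] at hdist
    have hxa : x < h (g x₀ - ε') := by
      have := abs_lt.1 (lt_of_lt_of_le hdist (min_le_left _ _))
      linarith [this.2]
    have hxb : h (g x₀ + ε') < x := by
      have := abs_lt.1 (lt_of_lt_of_le hdist (min_le_right _ _))
      linarith [this.1]
    have hxle : x ≤ h t₁ :=
      le_of_lt (lt_of_lt_of_le hxa (hantile t₁ (g x₀ - ε') (le_refl _) hym (by linarith)))
    obtain ⟨ha, hb, hc⟩ := hg x hxle
    have hgxa : g x₀ - ε' < g x := by
      by_contra hge
      push_neg at hge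
      have := hantile (g x) (g x₀ - ε') ha hge (by linarith)
      rw [hc] at this
      linarith
    have hgxb : g x < g x₀ + ε' := by
      by_contra hge
      push_neg at hge
      have := hantile (g x₀ + ε') (g x) (le_trans hy₀t₁ (by linarith)) hge hb
      rw [hc] at this
      linarith
    rw [Real.dist_eq, abs_lt]
    constructor <;> [linarith; linarith]
  -- the key MVT decomposition
  have hKEY : ∀ x : ℝ, ∃ ξ η : ℝ, (x < h t₁ ∧ x ≠ x₀) →
      (|ξ - x₀| ≤ |x - x₀| ∧ |η - g x₀| ≤ |g x - g x₀| ∧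
        (g x - g x₀) / (x - x₀) = -(px N ev ξ (g x)) / py N ev β x₀ η) := by
    intro x
    by_cases hcond : x < h t₁ ∧ x ≠ x₀
    swap
    · exact ⟨0, 0, fun hc => absurd hc hcond⟩
    obtain ⟨hxlt, hxne⟩ := hcond
    obtain ⟨hu1, hu2, hu3⟩ := hg x hxlt.le
    have hupos : 0 < g x := lt_of_lt_of_le ht₁pos hu1
    have hpsix : psi N ev β x (g x) = π / 2 := by have := heq (g x) hu1 hu2; rwa [hu3] at this
    have hpsix₀ : psi N ev β x₀ (g x₀) = π / 2 := by have := heq (g x₀) hy₀t₁ hy₀W; rwa [hy₀x₀] at this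
    have hune : g x ≠ g x₀ := by
      intro hcontra
      apply hxne
      rw [← hu3, hcontra, hy₀x₀]
    obtain ⟨ξ, hξ1, hξ2, hξ3⟩ := mvt_signed (fun s => psi N ev β s (g x))
      (fun s => px N ev s (g x)) (Ne.symm hxne)
      (fun s _ => hasDerivAt_psi_x N ev β s hupos.ne')
    obtain ⟨η, hη1, hη2, hη3⟩ := mvt_signed (fun s => psi N ev β x₀ s)
      (fun s => py N ev β x₀ s) (Ne.symm hune)
      (fun s hs => by
        rcases Set.mem_uIcc.1 hs with ⟨h1, _⟩ | ⟨h1, _⟩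
        · exact hasDerivAt_psi_y N ev β x₀ (lt_of_lt_of_le ht₁pos (le_trans hy₀t₁ h1)).ne'
        · exact hasDerivAt_psi_y N ev β x₀ (lt_of_lt_of_le ht₁pos (le_trans hu1 h1)).ne')
    have hηt₁ : t₁ ≤ η := by
      rcases Set.mem_uIcc.1 hη2 with ⟨h1, _⟩ | ⟨h1, _⟩
      · exact le_trans hy₀t₁ h1
      · exact le_trans hu1 h1
    have hηpos : 0 < η := lt_of_lt_of_le ht₁pos hηt₁
    have hpyn : 0 < py N ev β x₀ η := py_pos hN ev hβ x₀ hηpos (hβt η hηt₁)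
    refine ⟨ξ, η, fun _ => ⟨hξ1, hη1, ?_⟩⟩
    have hsum : px N ev ξ (g x) * (x - x₀) + py N ev β x₀ η * (g x - g x₀) = 0 := by
      linarith
    rw [div_eq_div_iff (sub_ne_zero.2 hxne) hpyn.ne']
    linear_combination hsum
  choose ξf ηf hKEYf using hKEY
  have hx₀X₁ : x₀ < h t₁ := lt_of_le_of_lt hx₀ hXX₁
  have hev1 : ∀ᶠ x in nhdsWithin x₀ {x₀}ᶜ, x < h t₁ ∧ x ≠ x₀ := by
    filter_upwards [mem_nhdsWithin_of_mem_nhds (Iio_mem_nhds hx₀X₁), self_mem_nhdsWithin]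
    exact fun x h1 h2 => ⟨h1, h2⟩
  have hgx : Filter.Tendsto g (nhdsWithin x₀ {x₀}ᶜ) (nhds (g x₀)) :=
    hgcont.tendsto.mono_left nhdsWithin_le_nhds
  have habs : Filter.Tendsto (fun x => |x - x₀|) (nhdsWithin x₀ {x₀}ᶜ) (nhds 0) := by
    have h1 : Continuous (fun x : ℝ => |x - x₀|) := (continuous_id.sub continuous_const).abs
    have h2 := h1.tendsto x₀
    simp only [id, sub_self, abs_zero] at h2
    exact h2.mono_left nhdsWithin_le_nhds
  have hxi : Filter.Tendsto ξf (nhdsWithin x₀ {x₀}ᶜ) (nhds x₀) := by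
    have h0' : Filter.Tendsto (fun x => ξf x - x₀) (nhdsWithin x₀ {x₀}ᶜ) (nhds 0) := by
      apply squeeze_zero_norm' ?_ habs
      filter_upwards [hev1] with x hx
      simpa [Real.norm_eq_abs] using (hKEYf x hx).1
    simpa using h0'.add_const x₀
  have hgabs : Filter.Tendsto (fun x => |g x - g x₀|) (nhdsWithin x₀ {x₀}ᶜ) (nhds 0) := by
    have := (hgx.sub_const (g x₀)).abs
    simpa using this
  have heta : Filter.Tendsto ηf (nhdsWithin x₀ {x₀}ᶜ) (nhds (g x₀)) := by
    have h0' : Filter.Tendsto (fun x => ηf x - g x₀) (nhdsWithin x₀ {x₀}ᶜ) (nhds 0) := by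
      apply squeeze_zero_norm' ?_ hgabs
      filter_upwards [hev1] with x hx
      simpa [Real.norm_eq_abs] using (hKEYf x hx).2.1
    simpa using h0'.add_const (g x₀)
  have hpy₀ : 0 < py N ev β x₀ (g x₀) := py_pos hN ev hβ x₀ hy₀pos (hβt _ hy₀t₁)
  set D : ℝ := -(px N ev x₀ (g x₀)) / py N ev β x₀ (g x₀) with hDdef
  have hF : ContinuousAt (fun p : ℝ × ℝ × ℝ => -(px N ev p.1 p.2.1) / py N ev β x₀ p.2.2)
      (x₀, g x₀, g x₀) := by
    apply ContinuousAt.div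
    · apply ContinuousAt.neg
      show ContinuousAt ((fun q : ℝ × ℝ => px N ev q.1 q.2) ∘
        (fun p : ℝ × ℝ × ℝ => (p.1, p.2.1))) (x₀, g x₀, g x₀)
      exact ContinuousAt.comp (continuousAt_px ev (x₀, g x₀) hy₀pos.ne')
        ((continuous_fst.prodMk (continuous_snd.fst)).continuousAt)
    · show ContinuousAt ((fun s : ℝ => py N ev β x₀ s) ∘ (fun p : ℝ × ℝ × ℝ => p.2.2))
        (x₀, g x₀, g x₀)
      exact ContinuousAt.comp (continuousAt_py ev β x₀ hy₀pos.ne')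
        (continuous_snd.snd.continuousAt)
    · exact hpy₀.ne'
  have htuple : Filter.Tendsto (fun x => (ξf x, g x, ηf x)) (nhdsWithin x₀ {x₀}ᶜ)
      (nhds (x₀, g x₀, g x₀)) := hxi.prodMk_nhds (hgx.prodMk_nhds heta)
  have hslope : Filter.Tendsto (slope g x₀) (nhdsWithin x₀ {x₀}ᶜ) (nhds D) := by
    apply Filter.Tendsto.congr' ?_ (hF.tendsto.comp htuple)
    filter_upwards [hev1] with x hx
    rw [slope_def_field]
    exact ((hKEYf x hx).2.2).symm
  have hD : HasDerivAt g D x₀ := hasDerivAt_iff_tendsto_slope.2 hslope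
  have hpxpos := px_pos hN ev x₀ hy₀pos
  have hDneg : D < 0 := by
    rw [hDdef, neg_div]
    exact neg_lt_zero.2 (div_pos hpxpos hpy₀)
  have hc₀β : c₀ ≤ β * g x₀ := by
    have h1 : c₀ / β ≤ g x₀ := hy₀t₀
    rw [div_le_iff₀ hβ] at h1
    linarith
  have hple : px N ev x₀ (g x₀) ≤ β / c₀ := by
    have h1 := px_le hN ev x₀ hy₀pos
    have h2 : 1 / g x₀ ≤ β / c₀ := by
      rw [div_le_div_iff₀ hy₀pos hc₀pos]
      nlinarith
    linarith
  have hpyge : β * (4 * c₀ - 1) / (2 * c₀) ≤ py N ev β x₀ (g x₀) := by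
    have h1 := py_ge hN ev β x₀ hy₀pos
    have h2 : 1 / (2 * g x₀) ≤ β / (2 * c₀) := by
      rw [div_le_div_iff₀ (by positivity) (by positivity)]
      nlinarith
    have h3 : β * (4 * c₀ - 1) / (2 * c₀) = 2 * β - β / (2 * c₀) := by
      field_simp
      ring
    linarith
  have hdpos : 0 < β * (4 * c₀ - 1) / (2 * c₀) := by
    apply div_pos
    · nlinarith
    · positivity
  have hDlb : 2 / (1 - 4 * c₀) ≤ D := by
    have hratio : px N ev x₀ (g x₀) / py N ev β x₀ (g x₀)
        ≤ (β / c₀) / (β * (4 * c₀ - 1) / (2 * c₀)) :=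
      div_le_div₀ (by positivity) hple hdpos hpyge
    have hval : (β / c₀) / (β * (4 * c₀ - 1) / (2 * c₀)) = 2 / (4 * c₀ - 1) := by
      have h4c : (4 * c₀ - 1 : ℝ) ≠ 0 := by nlinarith
      have hβne : (β : ℝ) ≠ 0 := hβ.ne'
      have hc₀ne : (c₀ : ℝ) ≠ 0 := hc₀pos.ne'
      field_simp
    have h2 : 2 / (1 - 4 * c₀) = -(2 / (4 * c₀ - 1)) := by
      have he : (1 - 4 * c₀ : ℝ) = -(4 * c₀ - 1) := by ring
      rw [he, div_neg]
    rw [hDdef, h2, neg_div]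
    exact neg_le_neg (hratio.trans (le_of_eq hval))
  exact ⟨D, hD.hasDerivWithinAt, hDlb, hDneg⟩
end

section
/- Real positive representation of the steepest-descent integral. For N ≥ 3, set K = −i ∫_{−π/(2β)}^{π/(2β)} e^{(N/2)(R(h(y) + iy) − R(γ))} · (h′(y) + i) dy (the integral of e^{(N/2)(R(z)−R(γ))} along S parametrized by z = h(y) + iy). Then K = 2 ∫_0^{π/(2β)} e^{(N/2)(R(h(y) + iy) − R(γ))} dy; in particular R is real-valued at every point of S, and K is a positive real number. -/
open Finset Complex Real MeasureTheory

lemma SD.im_Rfun (N : ℕ) (ev : Fin N → ℝ) (β : ℝ) (z : ℂ) :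
    (Rfun N ev β z).im = 2*β*z.im - (1/N : ℝ) * ∑ i, (z - (ev i : ℂ)).arg := by
  have h1 : ((1 : ℂ) / N) = ((1/N : ℝ) : ℂ) := by push_cast; ring
  simp [Rfun, h1, Complex.mul_im, Complex.im_sum, Complex.log_im]

lemma SD.div_sqrt_mono {y x₁ x₂ : ℝ} (hy : 0 < y) (h : x₁ < x₂) :
    x₁ / Real.sqrt (x₁^2+y^2) < x₂ / Real.sqrt (x₂^2+y^2) := by
  set s1 := Real.sqrt (x₁^2+y^2) with hs1def
  set s2 := Real.sqrt (x₂^2+y^2) with hs2def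
  have hs1 : 0 < s1 := Real.sqrt_pos.2 (by positivity)
  have hs2 : 0 < s2 := Real.sqrt_pos.2 (by positivity)
  have hq1 : s1^2 = x₁^2+y^2 := Real.sq_sqrt (by positivity)
  have hq2 : s2^2 = x₂^2+y^2 := Real.sq_sqrt (by positivity)
  rw [div_lt_div_iff₀ hs1 hs2]
  rcases le_or_gt 0 x₁ with h1 | h1
  · have hx2 : 0 < x₂ := lt_of_le_of_lt h1 h
    refine lt_of_pow_lt_pow_left₀ 2 (by positivity) ?_
    rw [mul_pow, mul_pow, hq1, hq2]
    have hx : x₁^2 < x₂^2 := by nlinarith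
    nlinarith [mul_pos (sub_pos.2 hx) (mul_pos hy hy)]
  · rcases le_or_gt 0 x₂ with h2 | h2
    · have : x₁ * s2 < 0 := mul_neg_of_neg_of_pos h1 hs2
      exact lt_of_lt_of_le this (mul_nonneg h2 hs1.le)
    · have key : -(x₂ * s1) < -(x₁ * s2) := by
        refine lt_of_pow_lt_pow_left₀ 2 (by nlinarith) ?_
        have e1 : (-(x₂*s1))^2 = x₂^2*(x₁^2+y^2) := by rw [neg_pow, mul_pow, hq1]; ring
        have e2 : (-(x₁*s2))^2 = x₁^2*(x₂^2+y^2) := by rw [neg_pow, mul_pow, hq2]; ring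
        rw [e1, e2]
        have hx : x₂^2 < x₁^2 := by nlinarith
        nlinarith [mul_pos (sub_pos.2 hx) (mul_pos hy hy)]
      linarith

lemma SD.arg_anti {y x₁ x₂ : ℝ} (hy : 0 < y) (h : x₁ < x₂) :
    ((x₂ : ℂ) + y*Complex.I).arg < ((x₁ : ℂ) + y*Complex.I).arg := by
  set z1 : ℂ := (x₁ : ℂ) + y*Complex.I with hz1
  set z2 : ℂ := (x₂ : ℂ) + y*Complex.I with hz2
  have him1 : z1.im = y := by simp [hz1]
  have him2 : z2.im = y := by simp [hz2]
  have hre1 : z1.re = x₁ := by simp [hz1]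
  have hre2 : z2.re = x₂ := by simp [hz2]
  have hz1ne : z1 ≠ 0 := fun hh => by rw [hh] at him1; simp at him1; linarith
  have hz2ne : z2 ≠ 0 := fun hh => by rw [hh] at him2; simp at him2; linarith
  have harg1 : z1.arg ∈ Set.Icc 0 π := ⟨Complex.arg_nonneg_iff.2 (by rw [him1]; exact hy.le),
    (Complex.arg_lt_pi_iff.2 (Or.inr (by rw [him1]; exact hy.ne'))).le⟩
  have harg2 : z2.arg ∈ Set.Icc 0 π := ⟨Complex.arg_nonneg_iff.2 (by rw [him2]; exact hy.le),
    (Complex.arg_lt_pi_iff.2 (Or.inr (by rw [him2]; exact hy.ne'))).le⟩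
  have hcos : Real.cos z1.arg < Real.cos z2.arg := by
    rw [Complex.cos_arg hz1ne, Complex.cos_arg hz2ne]
    have habs1 : ‖z1‖ = Real.sqrt (x₁^2 + y^2) := by
      rw [Complex.norm_def, Complex.normSq_apply, hre1, him1]; ring_nf
    have habs2 : ‖z2‖ = Real.sqrt (x₂^2 + y^2) := by
      rw [Complex.norm_def, Complex.normSq_apply, hre2, him2]; ring_nf
    rw [habs1, habs2, hre1, hre2]
    exact SD.div_sqrt_mono hy h
  exact (Real.strictAntiOn_cos.lt_iff_gt harg1 harg2).mp hcos





lemma SD.shift (x y c : ℝ) : (x:ℂ) + y*Complex.I - (c:ℂ) = ((x - c : ℝ):ℂ) + y*Complex.I := by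
  push_cast; ring

lemma SD.imR_lt {N : ℕ} (hN : 0 < N) (ev : Fin N → ℝ) (β : ℝ) {y x₁ x₂ : ℝ}
    (hy : 0 < y) (h : x₁ < x₂) :
    (Rfun N ev β ((x₁:ℂ) + y*Complex.I)).im < (Rfun N ev β ((x₂:ℂ) + y*Complex.I)).im := by
  haveI : Nonempty (Fin N) := Fin.pos_iff_nonempty.mp hN
  rw [SD.im_Rfun, SD.im_Rfun]
  simp only [Complex.add_im, Complex.ofReal_im, Complex.mul_im, Complex.I_im, Complex.I_re,
    Complex.ofReal_re]
  have hsum : ∑ i, (((x₂:ℂ) + y*Complex.I - (ev i:ℂ)).arg)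
      < ∑ i, (((x₁:ℂ) + y*Complex.I - (ev i:ℂ)).arg) := by
    refine Finset.sum_lt_sum_of_nonempty Finset.univ_nonempty fun i _ => ?_
    rw [SD.shift, SD.shift]
    exact SD.arg_anti hy (by linarith)
  have hNpos : (0:ℝ) < 1/N := by positivity
  nlinarith [mul_lt_mul_of_pos_left hsum hNpos]

lemma SD.imR_inj {N : ℕ} (hN : 0 < N) (ev : Fin N → ℝ) (β : ℝ) {y x₁ x₂ : ℝ} (hy : 0 < y)
    (h1 : (Rfun N ev β ((x₁:ℂ) + y*Complex.I)).im = 0)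
    (h2 : (Rfun N ev β ((x₂:ℂ) + y*Complex.I)).im = 0) : x₁ = x₂ := by
  rcases lt_trichotomy x₁ x₂ with hc | hc | hc
  · exact absurd (SD.imR_lt hN ev β hy hc) (by rw [h1, h2]; exact lt_irrefl 0)
  · exact hc
  · exact absurd (SD.imR_lt hN ev β hy hc) (by rw [h1, h2]; exact lt_irrefl 0)

lemma SD.imR_neg (N : ℕ) (ev : Fin N → ℝ) (β : ℝ) {x y : ℝ} (hy : y ≠ 0) :
    (Rfun N ev β ((x:ℂ) + (-y : ℝ)*Complex.I)).im
      = -(Rfun N ev β ((x:ℂ) + y*Complex.I)).im := by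
  rw [SD.im_Rfun, SD.im_Rfun]
  have harg : ∀ i : Fin N, (((x:ℂ) + (-y:ℝ)*Complex.I - (ev i:ℂ)).arg)
      = -(((x:ℂ) + y*Complex.I - (ev i:ℂ)).arg) := by
    intro i
    rw [SD.shift, SD.shift]
    have hconj : ((x - ev i : ℝ):ℂ) + (-y:ℝ)*Complex.I
        = (starRingEnd ℂ) (((x - ev i : ℝ):ℂ) + y*Complex.I) := by
      apply Complex.ext <;> simp
    rw [hconj, Complex.arg_conj]
    have : (((x - ev i : ℝ):ℂ) + y*Complex.I).arg ≠ π := by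
      intro hpi
      have := Complex.arg_eq_pi_iff.mp hpi
      simp at this
      exact hy this.2
    rw [if_neg this]
  simp only [harg, Finset.sum_neg_distrib]
  simp only [Complex.add_im, Complex.ofReal_im, Complex.mul_im, Complex.I_im, Complex.I_re,
    Complex.ofReal_re]
  ring

lemma SD.imR_gamma_pos {N : ℕ} (hN : 0 < N) (ev : Fin N → ℝ) {β : ℝ} (hβ : 0 < β) {γ : ℝ}
    (hline : ∀ i, 0 < γ - ev i)
    (hγeq : (1 / N : ℝ) * ∑ i, 1 / (γ - ev i) = 2 * β) {y : ℝ} (hy : 0 < y) :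
    0 < (Rfun N ev β ((γ:ℂ) + y*Complex.I)).im := by
  haveI : Nonempty (Fin N) := Fin.pos_iff_nonempty.mp hN
  rw [SD.im_Rfun]
  simp only [Complex.add_im, Complex.ofReal_im, Complex.mul_im, Complex.I_im, Complex.I_re,
    Complex.ofReal_re]
  have key : ∑ i, (((γ:ℂ) + y*Complex.I - (ev i:ℂ)).arg) < ∑ i, y * (1 / (γ - ev i)) := by
    refine Finset.sum_lt_sum_of_nonempty Finset.univ_nonempty fun i _ => ?_
    rw [SD.shift]
    set w : ℂ := ((γ - ev i : ℝ):ℂ) + y*Complex.I with hw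
    have hre : w.re = γ - ev i := by simp [hw]
    have him : w.im = y := by simp [hw]
    have h0 : 0 < w.arg := by
      rcases lt_or_eq_of_le (Complex.arg_nonneg_iff.2 (by rw [him]; exact hy.le)) with hh | hh
      · exact hh
      · exfalso
        have := Complex.arg_eq_zero_iff.mp hh.symm
        rw [him] at this; exact hy.ne' this.2
    have hhalf : w.arg < π/2 := Complex.arg_lt_pi_div_two_iff.2 (Or.inl (by rw [hre]; exact hline i))
    have htan := Real.lt_tan h0 hhalf
    rw [Complex.tan_arg, hre, him] at htan
    calc w.arg < y / (γ - ev i) := htan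
      _ = y * (1 / (γ - ev i)) := by ring
  have hNpos : (0:ℝ) < 1/N := by positivity
  have hsum : (1/N : ℝ) * ∑ i, (((γ:ℂ) + y*Complex.I - (ev i:ℂ)).arg) < (1/N : ℝ) * ∑ i, y * (1/(γ - ev i)) :=
    mul_lt_mul_of_pos_left key hNpos
  have : (1/N : ℝ) * ∑ i, y * (1/(γ - ev i)) = y * (2*β) := by
    rw [← Finset.mul_sum, ← hγeq]; ring
  nlinarith



noncomputable def Rder (N : ℕ) (ev : Fin N → ℝ) (β : ℝ) (z : ℂ) : ℂ :=
  2 * (β : ℂ) - (1 / N : ℂ) * ∑ i, (z - (ev i : ℂ))⁻¹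

lemma SD.hasDerivAt_Rfun (N : ℕ) (ev : Fin N → ℝ) (β : ℝ) {z : ℂ}
    (hz : ∀ i, z - (ev i : ℂ) ∈ Complex.slitPlane) :
    HasDerivAt (Rfun N ev β) (Rder N ev β z) z := by
  have h1 : HasDerivAt (fun w : ℂ => 2 * (β : ℂ) * w) (2 * (β : ℂ)) z := by
    simpa using (hasDerivAt_id z).const_mul (2 * (β : ℂ))
  have h2 : HasDerivAt (fun w : ℂ => ∑ i, Complex.log (w - (ev i : ℂ)))
      (∑ i, (z - (ev i : ℂ))⁻¹) z := by
    refine HasDerivAt.fun_sum fun i _ => ?_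
    have hin : HasDerivAt (fun w : ℂ => w - (ev i : ℂ)) 1 z := (hasDerivAt_id z).sub_const _
    have hlog := Complex.hasDerivAt_log (hz i)
    simpa [Function.comp_def] using hlog.comp z hin
  have hfin : HasDerivAt (fun w : ℂ => 2 * (β : ℂ) * w - (1/N : ℂ) * ∑ i, Complex.log (w - (ev i : ℂ)))
      (2 * (β : ℂ) - (1/N : ℂ) * ∑ i, (z - (ev i : ℂ))⁻¹) z := by
    have := h1.sub (h2.const_mul ((1:ℂ)/N))
    exact this
  exact hfin

lemma SD.hasDerivAt_curve (h : ℝ → ℝ) {h' y : ℝ} (hd : HasDerivAt h h' y) :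
    HasDerivAt (fun t : ℝ => ((h t : ℂ) + (t : ℂ) * Complex.I)) ((h' : ℂ) + Complex.I) y := by
  have h1 : HasDerivAt (fun t : ℝ => ((h t : ℝ) : ℂ)) (h' : ℂ) y := hd.ofReal_comp
  have h2 : HasDerivAt (fun t : ℝ => (t : ℂ) * Complex.I) Complex.I y := by
    have := (Complex.ofRealCLM.hasDerivAt (x := y)).mul_const Complex.I
    simpa using this
  exact h1.add h2
lemma SD.hasDerivAt_comp (N : ℕ) (ev : Fin N → ℝ) (β : ℝ) (h : ℝ → ℝ) {h' y : ℝ}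
    (hd : HasDerivAt h h' y)
    (hz : ∀ i, (h y : ℂ) + (y : ℂ) * Complex.I - (ev i : ℂ) ∈ Complex.slitPlane) :
    HasDerivAt (fun t : ℝ => Rfun N ev β ((h t : ℂ) + (t : ℂ) * Complex.I))
      (Rder N ev β ((h y : ℂ) + (y : ℂ) * Complex.I) * ((h' : ℂ) + Complex.I)) y := by
  have hc := SD.hasDerivAt_curve h hd
  have hR := SD.hasDerivAt_Rfun N ev β hz
  have := (hR.hasFDerivAt.restrictScalars ℝ).comp_hasDerivAt y hc
  simpa [Function.comp_def, smul_eq_mul, mul_comm] using this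

lemma SD.im_Rder (N : ℕ) (ev : Fin N → ℝ) (β : ℝ) (z : ℂ) :
    (Rder N ev β z).im = (1/N : ℝ) * ∑ i, z.im / Complex.normSq (z - (ev i : ℂ)) := by
  have h1 : ((1 : ℂ) / N) = ((1/N : ℝ) : ℂ) := by push_cast; ring
  simp [Rder, h1, Complex.mul_im, Complex.im_sum, Complex.inv_im, Complex.sub_im,
    Complex.ofReal_im]
  rw [show (∑ x : Fin N, -z.im / Complex.normSq (z - (ev x:ℂ)))
      = -∑ x : Fin N, z.im / Complex.normSq (z - (ev x:ℂ)) by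
    rw [← Finset.sum_neg_distrib]
    exact Finset.sum_congr rfl fun i _ => by ring]
  ring

lemma SD.re_Rder_bound (N : ℕ) (hN : 0 < N) (ev : Fin N → ℝ) (β : ℝ) (z : ℂ)
    (hz : ∀ i, z - (ev i : ℂ) ≠ 0) (c : ℝ) (hc : 0 < c)
    (habs : ∀ i, c ≤ ‖z - (ev i : ℂ)‖) :
    |(Rder N ev β z).re| ≤ 2*|β| + 1/c := by
  have h1 : ((1 : ℂ) / N) = ((1/N : ℝ) : ℂ) := by push_cast; ring
  have hre : (Rder N ev β z).re = 2*β - (1/N : ℝ) * ∑ i, ((z - (ev i : ℂ))⁻¹).re := by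
    simp [Rder, h1, Complex.mul_re, Complex.re_sum]
  rw [hre]
  have hbound : |(1/N : ℝ) * ∑ i, ((z - (ev i : ℂ))⁻¹).re| ≤ 1/c := by
    rw [abs_mul]
    have h2 : |∑ i, ((z - (ev i : ℂ))⁻¹).re| ≤ N * (1/c) := by
      calc |∑ i, ((z - (ev i : ℂ))⁻¹).re| ≤ ∑ i, |((z - (ev i : ℂ))⁻¹).re| :=
            Finset.abs_sum_le_sum_abs _ _
        _ ≤ ∑ _i : Fin N, (1/c) := by
            refine Finset.sum_le_sum fun i _ => ?_
            have := Complex.abs_re_le_norm ((z - (ev i : ℂ))⁻¹)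
            rw [norm_inv] at this
            refine this.trans ?_
            rw [one_div]
            exact inv_anti₀ hc (habs i)
        _ = N * (1/c) := by simp [Finset.sum_const, Finset.card_univ]
    have hN' : |(1/N : ℝ)| = 1/N := abs_of_pos (by positivity)
    rw [hN']
    calc (1/N : ℝ) * |∑ i, ((z - (ev i : ℂ))⁻¹).re| ≤ (1/N : ℝ) * (N * (1/c)) := by
          exact mul_le_mul_of_nonneg_left h2 (by positivity)
      _ = 1/c := by field_simp
  have := abs_sub_abs_le_abs_sub (2*β : ℝ) ((1/N : ℝ) * ∑ i, ((z - (ev i : ℂ))⁻¹).re)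
  have habs2 : |2*β| ≤ 2*|β| := by rw [abs_mul]; simp
  calc |2*β - (1/N : ℝ) * ∑ i, ((z - (ev i : ℂ))⁻¹).re|
      ≤ |2*β| + |(1/N : ℝ) * ∑ i, ((z - (ev i : ℂ))⁻¹).re| := abs_sub _ _
    _ ≤ 2*|β| + 1/c := add_le_add habs2 hbound



lemma SD.Rfun_conj (N : ℕ) (ev : Fin N → ℝ) (β : ℝ) {z : ℂ} (him : z.im ≠ 0) :
    Rfun N ev β ((starRingEnd ℂ) z) = (starRingEnd ℂ) (Rfun N ev β z) := by
  unfold Rfun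
  simp only [map_sub, map_mul, map_sum]
  have h1 : ∀ i : Fin N, Complex.log ((starRingEnd ℂ) z - (ev i : ℂ))
      = (starRingEnd ℂ) (Complex.log (z - (ev i : ℂ))) := by
    intro i
    have : (starRingEnd ℂ) z - (ev i : ℂ) = (starRingEnd ℂ) (z - (ev i : ℂ)) := by
      rw [map_sub, Complex.conj_ofReal]
    rw [this, Complex.log_conj]
    intro hpi
    have := Complex.arg_eq_pi_iff.mp hpi
    rw [Complex.sub_im, Complex.ofReal_im, sub_zero] at this
    exact him this.2
  simp only [h1]
  congr 1
  · rw [map_ofNat]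
    simp [Complex.conj_ofReal]
  · congr 1
    have : ((1 : ℂ)/N) = ((1/N : ℝ) : ℂ) := by push_cast; ring
    rw [this, Complex.conj_ofReal]

lemma SD.re_Rfun (N : ℕ) (ev : Fin N → ℝ) (β : ℝ) (z : ℂ) :
    (Rfun N ev β z).re = 2*β*z.re - (1/N : ℝ) * ∑ i, Real.log (‖z - (ev i : ℂ)‖) := by
  have h1 : ((1 : ℂ) / N) = ((1/N : ℝ) : ℂ) := by push_cast; ring
  simp [Rfun, h1, Complex.mul_re, Complex.re_sum, Complex.log_re]

lemma SD.re_Rfun_le {N : ℕ} (hN : 0 < N) (ev : Fin N → ℝ) (β : ℝ) (z : ℂ) {c : ℝ} (hc : 0 < c)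
    (habs : ∀ i, c ≤ ‖z - (ev i : ℂ)‖) :
    (Rfun N ev β z).re ≤ 2*β*z.re - Real.log c := by
  rw [SD.re_Rfun]
  have hsum : (N : ℝ) * Real.log c ≤ ∑ i, Real.log (‖z - (ev i : ℂ)‖) := by
    calc (N : ℝ) * Real.log c = ∑ _i : Fin N, Real.log c := by
          simp [Finset.sum_const, Finset.card_univ]
      _ ≤ _ := Finset.sum_le_sum fun i _ => Real.log_le_log hc (habs i)
  have hNpos : (0:ℝ) < 1/N := by positivity
  have := mul_le_mul_of_nonneg_left hsum hNpos.le
  have hNN : (1/N : ℝ) * ((N:ℝ) * Real.log c) = Real.log c := by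
    field_simp
  linarith [this, hNN ▸ this]

lemma SD.poly_exp_bound {c : ℝ} (hc : 0 < c) {t : ℝ} (ht : 0 ≤ t) :
    t^2 * Real.exp (-(c*t)) ≤ (2/c)^2 := by
  have h1 : c*t/2 ≤ Real.exp (c*t/2) := by
    linarith [Real.add_one_le_exp (c*t/2)]
  have h2 : t ≤ (2/c) * Real.exp (c*t/2) := by
    calc t = (2/c)*(c*t/2) := by field_simp
      _ ≤ (2/c)*Real.exp (c*t/2) := by
          refine mul_le_mul_of_nonneg_left h1 (by positivity)
  have h3 : t^2 ≤ (2/c)^2 * Real.exp (c*t) := by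
    have e : Real.exp (c*t/2) * Real.exp (c*t/2) = Real.exp (c*t) := by
      rw [← Real.exp_add]; ring_nf
    nlinarith [h2, ht, Real.exp_pos (c*t/2)]
  have h5 : Real.exp (-(c*t)) * Real.exp (c*t) = 1 := by rw [← Real.exp_add]; simp
  nlinarith [mul_le_mul_of_nonneg_right h3 (Real.exp_pos (-(c*t))).le, h5]

lemma SD.exp_poly_global {c C γ : ℝ} (hc : 0 < c) (hC : 0 ≤ C) :
    ∀ x ≤ γ, Real.exp (c*x) * ((|x| + C)^2 + 1)
      ≤ Real.exp (c*γ) * (2*(2/c)^2 + 2*(|γ|+C)^2 + 1) := by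
  intro x hx
  set t := γ - x with htdef
  have ht : 0 ≤ t := by simp [htdef]; linarith
  have hxabs : |x| ≤ t + |γ| := by
    rcases abs_cases x with ⟨h1, h2⟩ | ⟨h1, h2⟩ <;> rcases abs_cases γ with ⟨h3, h4⟩ | ⟨h3, h4⟩ <;>
      simp [htdef] <;> linarith [abs_nonneg x, abs_nonneg γ]
  have hsq : (|x| + C)^2 ≤ 2*t^2 + 2*(|γ|+C)^2 := by
    have h0 : |x| + C ≤ t + (|γ|+C) := by linarith
    have h0sq : (|x|+C)^2 ≤ (t + (|γ|+C))^2 :=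
      pow_le_pow_left₀ (by positivity) h0 2
    nlinarith [sq_nonneg (t - (|γ|+C)), h0sq]
  have hexp : Real.exp (c*x) = Real.exp (c*γ) * Real.exp (-(c*t)) := by
    rw [← Real.exp_add]; congr 1; simp [htdef]; ring
  have hkey := SD.poly_exp_bound hc ht
  have he1 : Real.exp (-(c*t)) ≤ 1 := Real.exp_le_one_iff.2 (by nlinarith)
  have hepos : 0 < Real.exp (-(c*t)) := Real.exp_pos _
  have hgpos : 0 < Real.exp (c*γ) := Real.exp_pos _
  rw [hexp]
  have expand : Real.exp (c*γ) * Real.exp (-(c*t)) * ((|x| + C)^2 + 1)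
      ≤ Real.exp (c*γ) * (Real.exp (-(c*t)) * (2*t^2 + 2*(|γ|+C)^2 + 1)) := by
    rw [mul_assoc]
    refine mul_le_mul_of_nonneg_left ?_ hgpos.le
    refine mul_le_mul_of_nonneg_left ?_ hepos.le
    nlinarith
  refine expand.trans ?_
  refine mul_le_mul_of_nonneg_left ?_ hgpos.le
  have : Real.exp (-(c*t)) * (2*t^2 + 2*(|γ|+C)^2 + 1)
      = 2*(t^2 * Real.exp (-(c*t))) + Real.exp (-(c*t)) * (2*(|γ|+C)^2 + 1) := by ring
  rw [this]
  have h2 : Real.exp (-(c*t)) * (2*(|γ|+C)^2 + 1) ≤ 2*(|γ|+C)^2 + 1 := by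
    nlinarith [hepos.le, he1]
  nlinarith [hkey]

lemma SD.abs_ofReal_add_I (v : ℝ) : ‖(v:ℂ) + Complex.I‖ = Real.sqrt (v^2+1) := by
  rw [Complex.norm_def, Complex.normSq_apply]
  simp
  ring_nf

set_option maxHeartbeats 1000000 in
/-- **Real positive representation of the steepest-descent integral.**
For `N ≥ 3`, set `K = −i ∫_{−π/(2β)}^{π/(2β)} e^{(N/2)(R(h(y)+iy) − R(γ))} (h′(y) + i) dy`.
Then `K = 2 ∫_0^{π/(2β)} e^{(N/2)(R(h(y)+iy) − R(γ))} dy`; in particular `R` is real-valued at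
every point of the steepest-descent curve `S`, and `K` is a positive real number. -/
theorem steepest_descent_integral_real_positive
    (N : ℕ) (hN : 3 ≤ N) (ev : Fin N → ℝ) (hev : Antitone ev) (β : ℝ) (hβ : 0 < β)
    (γ : ℝ) (hγ : γ ∈ Set.Ioi (ev ⟨0, by omega⟩))
    (hγeq : (1 / N : ℝ) * ∑ i, 1 / (γ - ev i) = 2 * β)
    (h : ℝ → ℝ) (h0 : h 0 = γ)
    (hhS : ∀ y : ℝ, 0 < |y| → |y| < π / (2 * β) →
      (Rfun N ev β (h y + y * Complex.I)).im = 0)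
    (hC1 : ContDiffOn ℝ 1 h (Set.Ioo (-(π / (2 * β))) (π / (2 * β))))
    (K : ℂ)
    (hK : K = -Complex.I * ∫ y in Set.Ioo (-(π / (2 * β))) (π / (2 * β)),
        Complex.exp ((N / 2 : ℂ) *
            (Rfun N ev β (h y + y * Complex.I) - Rfun N ev β (γ : ℂ))) *
          (Complex.ofReal (deriv h y) + Complex.I)) :
    K = 2 * ∫ y in Set.Ioo (0 : ℝ) (π / (2 * β)),
        Complex.exp ((N / 2 : ℂ) *
          (Rfun N ev β (h y + y * Complex.I) - Rfun N ev β (γ : ℂ))) ∧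
    (∀ y : ℝ, |y| < π / (2 * β) → (Rfun N ev β (h y + y * Complex.I)).im = 0) ∧
    K.im = 0 ∧ 0 < K.re := by
  have hNpos : 0 < N := by omega
  set a := π / (2 * β) with ha_def
  have ha : 0 < a := by
    have := Real.pi_pos
    positivity
  have hgap : ∀ i : Fin N, 0 < γ - ev i := by
    intro i
    have h1 : ev i ≤ ev ⟨0, by omega⟩ := hev (by simp [Fin.le_def])
    have h2 : ev ⟨0, by omega⟩ < γ := hγ
    linarith
  have hImγ : (Rfun N ev β ((γ : ℝ) : ℂ)).im = 0 := by
    rw [SD.im_Rfun]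
    have harg : ∀ i : Fin N, ((γ:ℂ) - (ev i : ℂ)).arg = 0 := by
      intro i
      have e : (γ:ℂ) - (ev i : ℂ) = ((γ - ev i : ℝ) : ℂ) := by push_cast; ring
      rw [e]
      exact Complex.arg_ofReal_of_nonneg (hgap i).le
    simp [harg]
  have hIm0 : ∀ y : ℝ, |y| < a → (Rfun N ev β (↑(h y) + ↑y * Complex.I)).im = 0 := by
    intro y hy
    rcases eq_or_ne y 0 with rfl | hne
    · rw [show ((h 0 : ℝ) : ℂ) + ((0:ℝ):ℂ) * Complex.I = ((γ : ℝ) : ℂ) by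
        rw [h0]; push_cast; ring]
      exact hImγ
    · exact hhS y (abs_pos.2 hne) hy
  have heven : ∀ y : ℝ, |y| < a → h (-y) = h y := by
    have claim : ∀ y : ℝ, 0 < y → y < a → h (-y) = h y := by
      intro y hy0 hya
      have hyabs : |y| = y := abs_of_pos hy0
      have e1 : (Rfun N ev β (↑(h y) + ↑y * Complex.I)).im = 0 :=
        hhS y (by rw [hyabs]; exact hy0) (by rw [hyabs]; exact hya)
      have e2 : (Rfun N ev β (↑(h (-y)) + ↑(-y) * Complex.I)).im = 0 :=
        hhS (-y) (by rw [abs_neg, hyabs]; exact hy0) (by rw [abs_neg, hyabs]; exact hya)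
      have e3 := SD.imR_neg N ev β (x := h (-y)) (y := y) hy0.ne'
      have e4 : (Rfun N ev β (↑(h (-y)) + ↑y * Complex.I)).im = 0 := by
        rw [e3] at e2; linarith
      exact SD.imR_inj hNpos ev β hy0 e4 e1
    intro y hy
    rcases lt_trichotomy y 0 with hneg | rfl | hpos
    · have := claim (-y) (by linarith) (by rw [abs_of_neg hneg] at hy; linarith)
      rw [neg_neg] at this
      exact this.symm
    · simp
    · exact claim y hpos (by rwa [abs_of_pos hpos] at hy)
  have hlt : ∀ y : ℝ, 0 < |y| → |y| < a → h y < γ := by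
    have claim : ∀ t : ℝ, 0 < t → t < a → h t < γ := by
      intro t ht hta
      by_contra hcon
      push_neg at hcon
      have him := hIm0 t (by rwa [abs_of_pos ht])
      have hpos := SD.imR_gamma_pos hNpos ev hβ hgap hγeq ht
      rcases eq_or_lt_of_le hcon with heq | hlt2
      · rw [heq] at hpos; linarith
      · have := SD.imR_lt hNpos ev β ht hlt2
        rw [him] at this; linarith
    intro y hy0 hya
    rcases lt_trichotomy y 0 with hneg | rfl | hpos
    · have h1 : h y = h (-(-y)) := by rw [neg_neg]
      rw [h1, heven (-y) (by rwa [abs_neg])]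
      exact claim (-y) (by linarith) (by rwa [abs_of_neg hneg] at hya)
    · simp at hy0
    · exact claim y hpos (by rwa [abs_of_pos hpos] at hya)
  have hle : ∀ y : ℝ, |y| < a → h y ≤ γ := by
    intro y hy
    rcases eq_or_ne y 0 with rfl | hne
    · rw [h0]
    · exact (hlt y (abs_pos.2 hne) hy).le
  set F : ℝ → ℂ := fun y => Complex.exp ((N / 2 : ℂ) *
      (Rfun N ev β (↑(h y) + ↑y * Complex.I) - Rfun N ev β (γ : ℂ))) with hF_def
  set g : ℝ → ℂ := fun y => F y * (Complex.ofReal (deriv h y) + Complex.I) with hg_def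
  have hwim : ∀ y : ℝ, |y| < a →
      ((N / 2 : ℂ) * (Rfun N ev β (↑(h y) + ↑y * Complex.I) - Rfun N ev β (γ : ℂ))).im = 0 := by
    intro y hy
    have h2 := hIm0 y hy
    have h1 : ((N : ℂ) / 2) = (((N : ℝ) / 2 : ℝ) : ℂ) := by push_cast; ring
    rw [h1]
    simp [Complex.mul_im, Complex.sub_im, h2, hImγ]
  have hslit : ∀ y : ℝ, |y| < a → ∀ i : Fin N,
      (↑(h y) + ↑y * Complex.I - (ev i : ℂ)) ∈ Complex.slitPlane := by
    intro y hy i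
    rw [Complex.mem_slitPlane_iff]
    rcases eq_or_ne y 0 with rfl | hne
    · left
      simp [h0]
      push_cast
      linarith [hgap i]
    · right
      simp [hne]
  have hwre : ∀ y : ℝ,
      ((N / 2 : ℂ) * (Rfun N ev β (↑(h y) + ↑y * Complex.I) - Rfun N ev β (γ : ℂ))).re
        = ((N:ℝ)/2) * ((Rfun N ev β (↑(h y) + ↑y * Complex.I)).re - (Rfun N ev β (γ:ℂ)).re) := by
    intro y
    have h1 : ((N : ℂ) / 2) = (((N : ℝ) / 2 : ℝ) : ℂ) := by push_cast; ring
    rw [h1]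
    simp [Complex.mul_re, Complex.sub_re]
  have hRcont : ContinuousOn (fun y : ℝ => Rfun N ev β (↑(h y) + ↑y * Complex.I))
      (Set.Ioo (-a) a) := by
    have hhcont : ContinuousOn (fun t : ℝ => ((h t : ℂ) + (t:ℂ) * Complex.I))
        (Set.Ioo (-a) a) :=
      (Complex.continuous_ofReal.comp_continuousOn hC1.continuousOn).add
        ((Complex.continuous_ofReal.mul continuous_const).continuousOn)
    intro y hy
    have hCA : ContinuousAt (Rfun N ev β) (↑(h y) + ↑y * Complex.I) :=
      (SD.hasDerivAt_Rfun N ev β (hslit y (abs_lt.2 ⟨hy.1, hy.2⟩))).differentiableAt.continuousAt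
    have hcomp : ContinuousWithinAt ((Rfun N ev β) ∘ (fun t : ℝ => ((h t : ℂ) + (t:ℂ) * Complex.I)))
        (Set.Ioo (-a) a) y := ContinuousAt.comp_continuousWithinAt hCA (hhcont y hy)
    exact hcomp
  have hcontF : ContinuousOn F (Set.Ioo (-a) a) := by
    rw [hF_def]
    exact Complex.continuous_exp.comp_continuousOn
      (continuousOn_const.mul (hRcont.sub continuousOn_const))
  have hcontg : ContinuousOn g (Set.Ioo (-a) a) := by
    rw [hg_def]
    exact hcontF.mul
      ((Complex.continuous_ofReal.comp_continuousOn
        (hC1.continuousOn_deriv_of_isOpen isOpen_Ioo le_rfl)).add continuousOn_const)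
  have hid : ∀ y ∈ Set.Ioo (0:ℝ) a,
      (Rder N ev β (↑(h y) + ↑y * Complex.I)).re
        + (Rder N ev β (↑(h y) + ↑y * Complex.I)).im * deriv h y = 0 := by
    intro y hy
    obtain ⟨hy0, hya⟩ := hy
    have hyIoo : y ∈ Set.Ioo (-a) a := ⟨by linarith, hya⟩
    have hyabs : |y| < a := abs_lt.2 ⟨hyIoo.1, hyIoo.2⟩
    have hdiff : DifferentiableAt ℝ h y :=
      (hC1.differentiableOn one_ne_zero).differentiableAt (isOpen_Ioo.mem_nhds hyIoo)
    have hd : HasDerivAt h (deriv h y) y := hdiff.hasDerivAt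
    have hG := SD.hasDerivAt_comp N ev β h hd (hslit y hyabs)
    have hImG : HasDerivAt (fun t => (Rfun N ev β (↑(h t) + ↑t * Complex.I)).im)
        ((Rder N ev β (↑(h y) + ↑y * Complex.I) * (↑(deriv h y) + Complex.I)).im) y := by
      have := (Complex.imCLM.hasFDerivAt).comp_hasDerivAt y hG
      simpa [Function.comp_def] using this
    have heq0 : (fun _ => (0:ℝ)) =ᶠ[nhds y]
        (fun t => (Rfun N ev β (↑(h t) + ↑t * Complex.I)).im) := by
      filter_upwards [isOpen_Ioo.mem_nhds (show y ∈ Set.Ioo (0:ℝ) a from ⟨hy0, hya⟩)] with t ht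
      exact (hhS t (abs_pos.2 (ne_of_gt ht.1)) (by rw [abs_of_pos ht.1]; exact ht.2)).symm
    have hzero : (Rder N ev β (↑(h y) + ↑y * Complex.I) * (↑(deriv h y) + Complex.I)).im = 0 :=
      (hImG.congr_of_eventuallyEq heq0).unique (hasDerivAt_const y 0)
    rw [Complex.mul_im] at hzero
    simp only [Complex.add_re, Complex.add_im, Complex.ofReal_re, Complex.ofReal_im,
      Complex.I_re, Complex.I_im, add_zero, zero_add, mul_one] at hzero
    linarith [hzero]
  have hderiv_odd : ∀ y ∈ Set.Ioo (-a) a, deriv h y = -deriv h (-y) := by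
    intro y hy
    have hmem : Set.Ioo (-a) a ∈ nhds y := isOpen_Ioo.mem_nhds hy
    have heq : (fun t => h (-t)) =ᶠ[nhds y] h := by
      filter_upwards [hmem] with t ht
      exact heven t (abs_lt.2 ⟨ht.1, ht.2⟩)
    rw [← heq.deriv_eq]
    exact deriv_comp_neg h y
  have hFeven : ∀ y : ℝ, |y| < a → F (-y) = F y := by
    intro y hy
    have hRz : Rfun N ev β (↑(h (-y)) + ↑(-y) * Complex.I)
        = Rfun N ev β (↑(h y) + ↑y * Complex.I) := by
      rcases eq_or_ne y 0 with rfl | hne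
      · norm_num
      · have hconj : (↑(h (-y)) : ℂ) + ↑(-y) * Complex.I
            = (starRingEnd ℂ) ((↑(h y) : ℂ) + ↑y * Complex.I) := by
          rw [heven y hy]; apply Complex.ext <;> simp
        rw [hconj, SD.Rfun_conj N ev β (by simpa using hne)]
        exact Complex.conj_eq_iff_im.2 (hIm0 y hy)
    simp only [hF_def]
    rw [hRz]
  have hgnorm_even : ∀ y ∈ Set.Ioo (-a) a, ‖g (-y)‖ = ‖g y‖ := by
    intro y hy
    have hya : |y| < a := abs_lt.2 ⟨hy.1, hy.2⟩
    simp only [hg_def]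
    rw [norm_mul, norm_mul, hFeven y hya]
    congr 1
    have h2 : deriv h (-y) = -deriv h y := by
      have := hderiv_odd y hy; linarith
    rw [h2]
    rw [show (Complex.ofReal (-(deriv h y))) = ((-(deriv h y) : ℝ) : ℂ) from rfl]
    rw [SD.abs_ofReal_add_I, SD.abs_ofReal_add_I, neg_pow]
    norm_num
  have hboundOuter : ∃ M : ℝ, ∀ y : ℝ, a/2 ≤ y → y < a → ‖g y‖ ≤ M := by
    obtain ⟨L, hL⟩ : ∃ L : ℝ, ∀ i : Fin N, |ev i| ≤ L := by
      refine ⟨|ev ⟨0, by omega⟩| + |ev ⟨N-1, by omega⟩|, fun i => ?_⟩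
      have h1 : ev i ≤ ev ⟨0, by omega⟩ := hev (by simp [Fin.le_def])
      have h2 : ev ⟨N-1, by omega⟩ ≤ ev i :=
        hev (by simp [Fin.le_def]; exact Nat.le_pred_of_lt i.isLt)
      rw [abs_le]
      constructor
      · have ha1 := neg_abs_le (ev ⟨N-1, by omega⟩)
        have ha2 := abs_nonneg (ev ⟨0, by omega⟩)
        linarith
      · have ha1 := le_abs_self (ev ⟨0, by omega⟩)
        have ha2 := abs_nonneg (ev ⟨N-1, by omega⟩)
        linarith
    have hL0 : 0 ≤ L := (abs_nonneg _).trans (hL ⟨0, by omega⟩)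
    set C : ℝ := L + a with hC_def
    have hC0 : 0 < C := by positivity
    set U : ℝ := 2*|β| + 2/a with hU_def
    have hU0 : 0 < U := by positivity
    set cβ : ℝ := N * β with hcβ_def
    have hcβ : 0 < cβ := mul_pos (by exact_mod_cast hNpos) hβ
    set c₀ : ℝ := ((N:ℝ)/2) * (- Real.log (a/2) - (Rfun N ev β ((γ:ℝ):ℂ)).re) with hc0_def
    set W : ℝ := max (U * (2/a)) 1 with hW_def
    have hW1 : 1 ≤ W := le_max_right _ _
    have hW2 : U * (2/a) ≤ W := le_max_left _ _
    refine ⟨Real.exp c₀ * (W * (Real.exp (cβ*γ) * (2*(2/cβ)^2 + 2*(|γ|+C)^2 + 1))), ?_⟩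
    intro y hy1 hy2
    have hy0 : 0 < y := lt_of_lt_of_le (by linarith) hy1
    have hyabs : |y| < a := by rw [abs_of_pos hy0]; exact hy2
    set x : ℝ := h y with hx_def
    set z : ℂ := (x : ℂ) + (y : ℂ) * Complex.I with hz_def
    have hzre : z.re = x := by simp [hz_def]
    have hzim : z.im = y := by simp [hz_def]
    have hxle : x ≤ γ := hle y hyabs
    have habs_low : ∀ i : Fin N, a/2 ≤ ‖z - (ev i : ℂ)‖ := by
      intro i
      have h1 : |(z - (ev i:ℂ)).im| ≤ ‖z - (ev i:ℂ)‖ := Complex.abs_im_le_norm _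
      have h2 : (z - (ev i:ℂ)).im = y := by simp [hz_def]
      rw [h2, abs_of_pos hy0] at h1
      linarith
    have hane : ∀ i : Fin N, z - (ev i:ℂ) ≠ 0 := by
      intro i hcon
      have hcc := habs_low i
      rw [hcon] at hcc
      simp at hcc
      linarith
    have habs_up : ∀ i : Fin N, ‖z - (ev i : ℂ)‖ ≤ |x| + C := by
      intro i
      have h1 := Complex.norm_le_abs_re_add_abs_im (z - (ev i:ℂ))
      have h2 : (z - (ev i:ℂ)).re = x - ev i := by simp [hz_def]
      have h3 : (z - (ev i:ℂ)).im = y := by simp [hz_def]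
      rw [h2, h3] at h1
      have h4 : |x - ev i| ≤ |x| + L := (abs_sub x (ev i)).trans (by linarith [hL i])
      have h5 : |y| ≤ a := by rw [abs_of_pos hy0]; linarith
      calc ‖z - (ev i:ℂ)‖ ≤ |x - ev i| + |y| := h1
        _ ≤ (|x| + L) + a := add_le_add h4 h5
        _ = |x| + C := by rw [hC_def]; ring
    have hxC : 0 < |x| + C := by positivity
    have hu := SD.re_Rder_bound N hNpos ev β z hane (a/2) (by linarith) habs_low
    have hu' : |(Rder N ev β z).re| ≤ U := by
      have e : (1:ℝ)/(a/2) = 2/a := by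
        field_simp
      rw [e] at hu
      rw [hU_def]
      exact hu
    have hv : (Rder N ev β z).im = (1/N:ℝ) * ∑ i, y / Complex.normSq (z - (ev i:ℂ)) := by
      have hvv := SD.im_Rder N ev β z
      rw [hzim] at hvv
      exact hvv
    have hvlow : (a/2) / (|x|+C)^2 ≤ (Rder N ev β z).im := by
      rw [hv]
      have hterm : ∀ i : Fin N, (a/2) / (|x|+C)^2 ≤ y / Complex.normSq (z - (ev i:ℂ)) := by
        intro i
        have hnpos : 0 < Complex.normSq (z - (ev i:ℂ)) := Complex.normSq_pos.2 (hane i)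
        have hnup : Complex.normSq (z - (ev i:ℂ)) ≤ (|x|+C)^2 := by
          rw [← Complex.sq_norm]
          exact pow_le_pow_left₀ (norm_nonneg _) (habs_up i) 2
        exact div_le_div₀ hy0.le hy1 hnpos hnup
      calc (a/2)/(|x|+C)^2 = (1/N:ℝ) * ((N:ℝ) * ((a/2)/(|x|+C)^2)) := by
            field_simp
        _ ≤ (1/N:ℝ) * ∑ i, y / Complex.normSq (z - (ev i:ℂ)) := by
            refine mul_le_mul_of_nonneg_left ?_ (by positivity)
            calc (N:ℝ) * ((a/2)/(|x|+C)^2) = ∑ _i : Fin N, (a/2)/(|x|+C)^2 := by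
                  simp [Finset.sum_const, Finset.card_univ]
              _ ≤ _ := Finset.sum_le_sum fun i _ => hterm i
    have hvpos : 0 < (Rder N ev β z).im := lt_of_lt_of_le (by positivity) hvlow
    have hid' : (Rder N ev β z).re + (Rder N ev β z).im * deriv h y = 0 := by
      have hidy := hid y ⟨hy0, hy2⟩
      rw [← hx_def, ← hz_def] at hidy
      exact hidy
    have hd_abs : |deriv h y| ≤ U * ((2/a) * (|x|+C)^2) := by
      have hdeq : deriv h y = -(Rder N ev β z).re / (Rder N ev β z).im := by
        field_simp
        linarith [hid']
      rw [hdeq, abs_div, abs_neg, abs_of_pos hvpos]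
      have h1 : |(Rder N ev β z).re| / (Rder N ev β z).im ≤ U / ((a/2)/(|x|+C)^2) :=
        div_le_div₀ hU0.le hu' (by positivity) hvlow
      refine h1.trans (le_of_eq ?_)
      rw [div_div_eq_mul_div]
      field_simp
    have hRez : (Rfun N ev β z).re ≤ 2*β*x - Real.log (a/2) := by
      have hh := SD.re_Rfun_le hNpos ev β z (show (0:ℝ) < a/2 by linarith) habs_low
      rw [hzre] at hh
      exact hh
    have hFy : ‖F y‖ ≤ Real.exp c₀ * Real.exp (cβ * x) := by
      have hω := hwre y
      rw [← hx_def, ← hz_def] at hω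
      have hnorm : ‖F y‖ = Real.exp (((N:ℝ)/2) * ((Rfun N ev β z).re - (Rfun N ev β ((γ:ℝ):ℂ)).re)) := by
        rw [hF_def]
        simp only
        rw [Complex.norm_exp]
        rw [← hx_def, ← hz_def, hω]
      rw [hnorm, ← Real.exp_add]
      refine Real.exp_le_exp.2 ?_
      have hmul : ((N:ℝ)/2) * ((Rfun N ev β z).re - (Rfun N ev β ((γ:ℝ):ℂ)).re)
          ≤ ((N:ℝ)/2) * ((2*β*x - Real.log (a/2)) - (Rfun N ev β ((γ:ℝ):ℂ)).re) := by
        refine mul_le_mul_of_nonneg_left (by linarith) (by positivity)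
      refine hmul.trans (le_of_eq ?_)
      rw [hc0_def, hcβ_def]
      ring
    have hdI : ‖(Complex.ofReal (deriv h y) + Complex.I)‖ ≤ |deriv h y| + 1 := by
      refine (norm_add_le _ _).trans ?_
      simp [Complex.norm_real]
    have hgy : ‖g y‖ ≤ (Real.exp c₀ * Real.exp (cβ * x)) * (U * ((2/a) * (|x|+C)^2) + 1) := by
      have e : ‖g y‖ = ‖F y‖ * ‖(Complex.ofReal (deriv h y) + Complex.I)‖ := by
        rw [hg_def]; simp [norm_mul]
      rw [e]
      refine mul_le_mul hFy (hdI.trans (by linarith [hd_abs])) (norm_nonneg _) (by positivity)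
    refine hgy.trans ?_
    have hstep : Real.exp (cβ * x) * (U * ((2/a) * (|x|+C)^2) + 1)
        ≤ W * (Real.exp (cβ * x) * ((|x|+C)^2 + 1)) := by
      have hepos : 0 < Real.exp (cβ * x) := Real.exp_pos _
      have hsq : 0 ≤ (|x|+C)^2 := sq_nonneg _
      have hkey : U * ((2/a) * (|x|+C)^2) + 1 ≤ W * ((|x|+C)^2 + 1) := by
        have h1 : U * ((2/a) * (|x|+C)^2) = (U * (2/a)) * (|x|+C)^2 := by ring
        rw [h1]
        nlinarith [mul_le_mul_of_nonneg_right hW2 hsq]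
      calc Real.exp (cβ * x) * (U * ((2/a) * (|x|+C)^2) + 1)
          ≤ Real.exp (cβ * x) * (W * ((|x|+C)^2 + 1)) :=
            mul_le_mul_of_nonneg_left hkey hepos.le
        _ = W * (Real.exp (cβ * x) * ((|x|+C)^2 + 1)) := by ring
    have hglob := SD.exp_poly_global hcβ hC0.le x hxle
    calc (Real.exp c₀ * Real.exp (cβ * x)) * (U * ((2/a) * (|x|+C)^2) + 1)
        = Real.exp c₀ * (Real.exp (cβ * x) * (U * ((2/a) * (|x|+C)^2) + 1)) := by ring
      _ ≤ Real.exp c₀ * (W * (Real.exp (cβ * x) * ((|x|+C)^2 + 1))) :=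
          mul_le_mul_of_nonneg_left hstep (Real.exp_pos _).le
      _ ≤ Real.exp c₀ * (W * (Real.exp (cβ*γ) * (2*(2/cβ)^2 + 2*(|γ|+C)^2 + 1))) := by
          refine mul_le_mul_of_nonneg_left ?_ (Real.exp_pos _).le
          refine mul_le_mul_of_nonneg_left ?_ (by linarith)
          exact hglob
  have hbound : ∃ M : ℝ, ∀ y ∈ Set.Ioo (-a) a, ‖g y‖ ≤ M := by
    obtain ⟨M2, hM2⟩ := hboundOuter
    obtain ⟨M1, hM1⟩ := (isCompact_Icc (a := -(a/2)) (b := a/2)).exists_bound_of_continuousOn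
      (hcontg.mono (fun t ht => ⟨by simp at ht ⊢; linarith [ht.1], by simp at ht ⊢; linarith [ht.2]⟩))
    refine ⟨max M1 M2, fun y hy => ?_⟩
    rcases le_or_gt y (a/2) with h1 | h1
    · rcases le_or_gt (-(a/2)) y with h2 | h2
      · exact (hM1 y ⟨h2, h1⟩).trans (le_max_left _ _)
      · rw [← hgnorm_even y hy]
        refine (hM2 (-y) (by linarith) (by linarith [hy.1])).trans (le_max_right _ _)
    · exact (hM2 y h1.le hy.2).trans (le_max_right _ _)
  have hgmeas : AEStronglyMeasurable g (MeasureTheory.volume.restrict (Set.Ioo (-a) a)) :=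
    hcontg.aestronglyMeasurable measurableSet_Ioo
  have hgint : IntegrableOn g (Set.Ioo (-a) a) := by
    obtain ⟨M, hM⟩ := hbound
    refine ⟨hgmeas, ?_⟩
    refine MeasureTheory.HasFiniteIntegral.restrict_of_bounded (C := M) measure_Ioo_lt_top ?_
    exact (MeasureTheory.ae_restrict_iff' measurableSet_Ioo).2 (MeasureTheory.ae_of_all _ hM)
  have hFnorm_le : ∀ y : ℝ, ‖F y‖ ≤ ‖g y‖ := by
    intro y
    have h1 : (1:ℝ) ≤ ‖(Complex.ofReal (deriv h y) + Complex.I)‖ := by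
      have := Complex.abs_im_le_norm (Complex.ofReal (deriv h y) + Complex.I)
      simpa using this
    calc ‖F y‖ = ‖F y‖ * 1 := by ring
      _ ≤ ‖F y‖ * ‖(Complex.ofReal (deriv h y) + Complex.I)‖ :=
          mul_le_mul_of_nonneg_left h1 (norm_nonneg _)
      _ = ‖g y‖ := by rw [hg_def]; simp [norm_mul]
  have hFint : IntegrableOn F (Set.Ioo (-a) a) :=
    MeasureTheory.Integrable.mono hgint (hcontF.aestronglyMeasurable measurableSet_Ioo)
      (MeasureTheory.ae_of_all _ hFnorm_le)
  have hFint0 : IntegrableOn F (Set.Ioo (0:ℝ) a) :=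
    hFint.mono_set (Set.Ioo_subset_Ioo (by linarith) le_rfl)
  have hgint0 : IntegrableOn g (Set.Ioo (0:ℝ) a) :=
    hgint.mono_set (Set.Ioo_subset_Ioo (by linarith) le_rfl)
  have hsplit : ∫ y in Set.Ioo (-a) a, g y
      = 2 * Complex.I * ∫ y in Set.Ioo (0:ℝ) a, F y := by
    have hint1 : IntervalIntegrable g MeasureTheory.volume (-a) 0 := by
      rw [intervalIntegrable_iff_integrableOn_Ioc_of_le (by linarith)]
      exact hgint.mono_set (fun t ht => ⟨ht.1, lt_of_le_of_lt ht.2 ha⟩)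
    have hint2 : IntervalIntegrable g MeasureTheory.volume 0 a := by
      rw [intervalIntegrable_iff_integrableOn_Ioc_of_le ha.le]
      exact hgint0.congr_set_ae (MeasureTheory.Ioo_ae_eq_Ioc).symm
    have e0 : ∫ y in Set.Ioo (-a) a, g y = ∫ y in (-a)..a, g y := by
      rw [intervalIntegral.integral_of_le (by linarith),
        ← MeasureTheory.integral_Ioc_eq_integral_Ioo]
    have e1 : (∫ y in (-a)..(0:ℝ), g y) + ∫ y in (0:ℝ)..a, g y = ∫ y in (-a)..a, g y :=
      intervalIntegral.integral_add_adjacent_intervals hint1 hint2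
    have e2 : ∫ y in (-a)..(0:ℝ), g y = ∫ y in (0:ℝ)..a, g (-y) := by
      rw [intervalIntegral.integral_comp_neg g]
      norm_num
    have e3 : ∫ y in (0:ℝ)..a, g (-y) = ∫ y in Set.Ioo (0:ℝ) a, g (-y) := by
      rw [intervalIntegral.integral_of_le ha.le, MeasureTheory.integral_Ioc_eq_integral_Ioo]
    have e3' : ∫ y in (0:ℝ)..a, g y = ∫ y in Set.Ioo (0:ℝ) a, g y := by
      rw [intervalIntegral.integral_of_le ha.le, MeasureTheory.integral_Ioc_eq_integral_Ioo]
    have e4 : ∫ y in Set.Ioo (0:ℝ) a, g (-y)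
        = ∫ y in Set.Ioo (0:ℝ) a, (2 * Complex.I * F y - g y) := by
      refine MeasureTheory.setIntegral_congr_fun measurableSet_Ioo fun y hy => ?_
      have hyI : y ∈ Set.Ioo (-a) a := ⟨by linarith [hy.1], hy.2⟩
      have hya : |y| < a := abs_lt.2 ⟨hyI.1, hyI.2⟩
      have hodd : deriv h (-y) = -deriv h y := by
        have := hderiv_odd y hyI; linarith
      simp only [hg_def]
      rw [hFeven y hya, hodd]
      push_cast
      ring
    have e5 : ∫ y in Set.Ioo (0:ℝ) a, (2 * Complex.I * F y - g y)
        = 2 * Complex.I * (∫ y in Set.Ioo (0:ℝ) a, F y) - ∫ y in Set.Ioo (0:ℝ) a, g y := by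
      rw [MeasureTheory.integral_sub (hFint0.const_mul _) hgint0,
        MeasureTheory.integral_const_mul]
    calc ∫ y in Set.Ioo (-a) a, g y = ∫ y in (-a)..a, g y := e0
      _ = (∫ y in (-a)..(0:ℝ), g y) + ∫ y in (0:ℝ)..a, g y := e1.symm
      _ = (∫ y in Set.Ioo (0:ℝ) a, (2 * Complex.I * F y - g y)) + ∫ y in Set.Ioo (0:ℝ) a, g y := by
          rw [e2, e3, e4, e3']
      _ = 2 * Complex.I * ∫ y in Set.Ioo (0:ℝ) a, F y := by rw [e5]; ring
  have hKval : K = 2 * ∫ y in Set.Ioo (0:ℝ) a, F y := by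
    have hK' : K = -Complex.I * ∫ y in Set.Ioo (-a) a, g y := hK
    rw [hK', hsplit]
    rw [show -Complex.I * (2 * Complex.I * ∫ y in Set.Ioo (0:ℝ) a, F y)
        = -(2 * (Complex.I * Complex.I)) * ∫ y in Set.Ioo (0:ℝ) a, F y from by ring,
      Complex.I_mul_I]
    ring
  have hFim : ∀ y ∈ Set.Ioo (0:ℝ) a, (F y).im = 0 := by
    intro y hy
    have hya : |y| < a := abs_lt.2 ⟨by linarith [hy.1], hy.2⟩
    simp only [hF_def]
    rw [Complex.exp_im, hwim y hya]
    simp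
  have hFre : ∀ y ∈ Set.Ioo (0:ℝ) a, 0 < (F y).re := by
    intro y hy
    have hya : |y| < a := abs_lt.2 ⟨by linarith [hy.1], hy.2⟩
    simp only [hF_def]
    rw [Complex.exp_re, hwim y hya]
    simp [Real.exp_pos]
  have him : (∫ y in Set.Ioo (0:ℝ) a, F y).im = 0 := by
    have him' := _root_.integral_im hFint0
    have hzero : ∫ y in Set.Ioo (0:ℝ) a, RCLike.im (F y) = 0 := by
      rw [MeasureTheory.setIntegral_congr_fun measurableSet_Ioo
        (g := fun _ => (0:ℝ)) (fun y hy => by simpa using hFim y hy)]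
      simp
    simpa using him'.symm.trans hzero
  have hre : 0 < (∫ y in Set.Ioo (0:ℝ) a, F y).re := by
    have hre' := _root_.integral_re hFint0
    suffices hpos : 0 < ∫ y in Set.Ioo (0:ℝ) a, RCLike.re (F y) by
      rw [hre'] at hpos
      simpa using hpos
    refine (MeasureTheory.setIntegral_pos_iff_support_of_nonneg_ae ?_ ?_).2 ?_
    · refine (MeasureTheory.ae_restrict_iff' measurableSet_Ioo).2
        (MeasureTheory.ae_of_all _ fun y hy => ?_)
      simpa using (hFre y hy).le
    · exact hFint0.re
    · have hsub : Set.Ioo (0:ℝ) a ⊆ Function.support (fun y => RCLike.re (F y)) ∩ Set.Ioo (0:ℝ) a :=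
        fun y hy => ⟨by simpa using (hFre y hy).ne', hy⟩
      calc (0:ENNReal) < MeasureTheory.volume (Set.Ioo (0:ℝ) a) := by
            rw [Real.volume_Ioo]
            simpa using ha
        _ ≤ _ := MeasureTheory.measure_mono hsub
  refine ⟨hKval, hIm0, ?_, ?_⟩
  · rw [hKval]
    simp [Complex.mul_im, him]
  · rw [hKval]
    have : (2 * ∫ y in Set.Ioo (0:ℝ) a, F y).re = 2 * (∫ y in Set.Ioo (0:ℝ) a, F y).re := by
      simp [Complex.mul_re]
    rw [this]
    linarith
end
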